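/- (Katriel's q-analogue of Spivey's formula.) For all natural numbers n, m: B_q[n+m] = Σ_{r=0}^{n} Σ_{j=0}^{m} S_q[m,j] · q^{rj} · C(n,r) · B_q[r] · ([j]_q)^{n−r}, where C(n,r) is the ordinary binomial coefficient. -/

import Mathlib

/-!
Let `L` be the linear functional on `ℝ[X]` with `L (X ^ i) = B_q[i]` and put
`F j n = L ((q^j X + [j]_q) ^ n)`, so that the right-hand side is `∑ j, S_q[m,j] F j n`.
The `q`-Bell recurrence `B_q[r+1] = L ((q X + [1]_q) ^ r)` says `L (X p) = L (p ∘ (q X + [1]_q))`,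
and since `[j+1]_q = [j]_q + q^j [1]_q` this gives `F j (n+1) = q^j F (j+1) n + [j]_q F j n`.
Against the Stirling recurrence, the right-hand side for `(n+1, m)` then equals the one for
`(n, m+1)`, and for `n = 0` it is `B_q[m]`. The `q`-Bell recurrence in degree `r` is the case
`(r, 1)` of the theorem, so a strong induction on `n` proves both at once.
-/

/-- The `q`-bracket `[t]_q = (q^t - 1)/(q - 1)` (real exponentiation). -/
noncomputable def qBracket (q t : ℝ) : ℝ := (q ^ t - 1) / (q - 1)

/-- The `q`-Stirling numbers of the second kind `S_q[n,k]`. -/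
noncomputable def qStirling (q : ℝ) : ℕ → ℕ → ℝ
  | 0, 0 => 1
  | 0, _ + 1 => 0
  | _ + 1, 0 => 0
  | n + 1, k + 1 =>
    if k + 1 ≤ n + 1 then
      q ^ k * qStirling q n k + qBracket q ((k : ℝ) + 1) * qStirling q n (k + 1)
    else 0

/-- The `q`-Bell numbers `B_q[n]`. -/
noncomputable def qBell (q : ℝ) (n : ℕ) : ℝ :=
  ∑ k ∈ Finset.range (n + 1), qStirling q n k

open Polynomial Finset

namespace Polynomial

variable {R : Type*} [CommRing R] (B : ℕ → R)

noncomputable def umbralEval : R[X] →ₗ[R] R := lsum fun i => LinearMap.mulRight R (B i)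

@[simp]
lemma umbralEval_monomial (i : ℕ) (a : R) : umbralEval B (monomial i a) = a * B i := by
  simp [umbralEval]

lemma umbralEval_C_mul (a : R) (p : R[X]) : umbralEval B (C a * p) = a * umbralEval B p := by
  rw [← smul_eq_C_mul, map_smul, smul_eq_mul]

lemma umbralEval_one : umbralEval B 1 = B 0 := by
  simpa using umbralEval_monomial B 0 1

lemma umbralEval_linear_pow (a c : R) (n : ℕ) :
    umbralEval B ((C a * X + C c) ^ n)
      = ∑ r ∈ range (n + 1), a ^ r * c ^ (n - r) * n.choose r * B r := by
  rw [add_pow, map_sum]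
  refine sum_congr rfl fun r _ => ?_
  have : (C a * X) ^ r * C c ^ (n - r) * (n.choose r : R[X])
      = monomial r (a ^ r * c ^ (n - r) * n.choose r) := by
    rw [← C_mul_X_pow_eq_monomial]; simp only [C_mul, C_pow, map_natCast]; ring
  rw [this, umbralEval_monomial]

lemma umbralEval_X_mul_of_natDegree_le {n : ℕ} (A : R[X])
    (hB : ∀ r ≤ n, B (r + 1) = umbralEval B (A ^ r)) {p : R[X]} (hp : p.natDegree ≤ n) :
    umbralEval B (X * p) = umbralEval B (p.comp A) := by
  rw [as_sum_range' p (n + 1) (by omega), mul_sum, sum_comp, map_sum, map_sum]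
  refine sum_congr rfl fun r hr => ?_
  rw [X_mul_monomial, umbralEval_monomial, monomial_comp, umbralEval_C_mul,
    hB r (mem_range_succ_iff.mp hr)]

end Polynomial

lemma qBracket_zero (q : ℝ) : qBracket q 0 = 0 := by
  simp [qBracket]

lemma qBracket_natCast_add_one (q : ℝ) (j : ℕ) :
    qBracket q ((j : ℝ) + 1) = qBracket q j + q ^ j * qBracket q 1 := by
  simp only [qBracket, Real.rpow_one, ← Nat.cast_add_one, Real.rpow_natCast]
  rw [mul_div_assoc', ← add_div]
  ring

lemma qStirling_eq_zero_of_lt (q : ℝ) {n k : ℕ} (h : n < k) : qStirling q n k = 0 := by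
  match n, k with
  | 0, k + 1 => rfl
  | n + 1, k + 1 => rw [qStirling, if_neg (by omega)]

lemma qStirling_succ_zero (q : ℝ) (n : ℕ) : qStirling q (n + 1) 0 = 0 := rfl

lemma qStirling_succ_succ (q : ℝ) (n k : ℕ) :
    qStirling q (n + 1) (k + 1)
      = q ^ k * qStirling q n k + qBracket q ((k : ℝ) + 1) * qStirling q n (k + 1) := by
  rw [qStirling]
  split_ifs with h
  · rfl
  · rw [qStirling_eq_zero_of_lt q (by omega : n < k),
      qStirling_eq_zero_of_lt q (by omega : n < k + 1)]
    ring

lemma qStirling_one_one (q : ℝ) : qStirling q 1 1 = 1 := by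
  simp [qStirling]

lemma qBell_zero (q : ℝ) : qBell q 0 = 1 := by
  simp [qBell, qStirling]

lemma sum_qStirling_succ_mul (q : ℝ) (m : ℕ) (Y : ℕ → ℝ) :
    ∑ j ∈ range (m + 2), qStirling q (m + 1) j * Y j
      = ∑ j ∈ range (m + 1), qStirling q m j * (q ^ j * Y (j + 1) + qBracket q j * Y j) := by
  have hshift :
      ∑ j ∈ range (m + 1), qBracket q ((j : ℝ) + 1) * qStirling q m (j + 1) * Y (j + 1)
      = ∑ j ∈ range (m + 1), qBracket q j * qStirling q m j * Y j := by
    rw [sum_range_succ, qStirling_eq_zero_of_lt q (Nat.lt_succ_self m), sum_range_succ' _ m]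
    simp [qBracket_zero]
  rw [sum_range_succ', qStirling_succ_zero, zero_mul, add_zero]
  simp only [qStirling_succ_succ, add_mul, sum_add_distrib, mul_add]
  rw [hshift]
  congr 1 <;> exact sum_congr rfl fun j _ => by ring

/-- The `j`-th iterate of `X ↦ q X + [1]_q`. -/
noncomputable def qAffine (q : ℝ) (j : ℕ) : ℝ[X] := C (q ^ j) * X + C (qBracket q j)

lemma natDegree_qAffine_pow_le (q : ℝ) (j n : ℕ) : (qAffine q j ^ n).natDegree ≤ n :=
  (natDegree_pow_le_of_le n natDegree_linear_le).trans_eq (mul_one n)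

lemma qAffine_comp_qAffine_one (q : ℝ) (j : ℕ) :
    (qAffine q j).comp (qAffine q 1) = qAffine q (j + 1) := by
  simp only [qAffine, add_comp, mul_comp, C_comp, X_comp, pow_one, Nat.cast_one, Nat.cast_add,
    qBracket_natCast_add_one]
  rw [pow_succ, C_add, C_mul, C_mul]
  ring

lemma umbralEval_qBell_qAffine_pow_succ (q : ℝ) (n : ℕ)
    (hbell : ∀ r ≤ n, qBell q (r + 1) = umbralEval (qBell q) (qAffine q 1 ^ r)) (j : ℕ) :
    umbralEval (qBell q) (qAffine q j ^ (n + 1))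
      = q ^ j * umbralEval (qBell q) (qAffine q (j + 1) ^ n)
        + qBracket q j * umbralEval (qBell q) (qAffine q j ^ n) := by
  have hsplit : qAffine q j ^ (n + 1)
      = C (q ^ j) * (X * qAffine q j ^ n) + C (qBracket q j) * qAffine q j ^ n := by
    rw [pow_succ, qAffine]; ring
  rw [hsplit, map_add, umbralEval_C_mul, umbralEval_C_mul,
    umbralEval_X_mul_of_natDegree_le _ _ hbell (natDegree_qAffine_pow_le q j n), pow_comp,
    qAffine_comp_qAffine_one]

lemma sum_qStirling_mul_umbralEval_succ (q : ℝ) (n m : ℕ)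
    (hbell : ∀ r ≤ n, qBell q (r + 1) = umbralEval (qBell q) (qAffine q 1 ^ r)) :
    ∑ j ∈ range (m + 1), qStirling q m j * umbralEval (qBell q) (qAffine q j ^ (n + 1))
      = ∑ j ∈ range (m + 2),
          qStirling q (m + 1) j * umbralEval (qBell q) (qAffine q j ^ n) := by
  simp only [sum_qStirling_succ_mul, umbralEval_qBell_qAffine_pow_succ q n hbell]

theorem qBell_add_eq_sum_qStirling_mul_umbralEval (q : ℝ) (n m : ℕ) :
    qBell q (n + m)
      = ∑ j ∈ range (m + 1), qStirling q m j * umbralEval (qBell q) (qAffine q j ^ n) := by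
  induction n using Nat.strong_induction_on generalizing m with
  | _ n ih =>
  cases n with
  | zero =>
    simp only [zero_add, pow_zero, umbralEval_one, qBell_zero, mul_one]
    rfl
  | succ n =>
    have hbell : ∀ r ≤ n, qBell q (r + 1) = umbralEval (qBell q) (qAffine q 1 ^ r) :=
      fun r hr => by
        simp [ih r (by omega) 1, sum_range_succ, qStirling_succ_zero, qStirling_one_one]
    rw [sum_qStirling_mul_umbralEval_succ q n m hbell, ← ih n (by omega), Nat.add_right_comm,
      Nat.add_assoc]

theorem katriel_q_spivey_general (q : ℝ) (n m : ℕ) :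
    qBell q (n + m)
    = ∑ r ∈ Finset.range (n + 1), ∑ j ∈ Finset.range (m + 1),
        qStirling q m j * q ^ (r * j) * (n.choose r : ℝ) * qBell q r *
          (qBracket q (j : ℝ)) ^ (n - r) := by
  rw [qBell_add_eq_sum_qStirling_mul_umbralEval, sum_comm]
  refine sum_congr rfl fun j _ => ?_
  rw [qAffine, umbralEval_linear_pow, mul_sum]
  refine sum_congr rfl fun r _ => ?_
  rw [mul_comm r j, pow_mul]
  ring

/-- Katriel's `q`-analogue of Spivey's Bell number formula. -/
theorem katriel_q_spivey (q : ℝ) (hq : 0 < q) (hq1 : q ≠ 1) (n m : ℕ) :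
    qBell q (n + m)
    = ∑ r ∈ Finset.range (n + 1), ∑ j ∈ Finset.range (m + 1),
        qStirling q m j * q ^ (r * j) * (n.choose r : ℝ) * qBell q r *
          (qBracket q (j : ℝ)) ^ (n - r) :=
  katriel_q_spivey_general q n m
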